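/- Let T be a connected multigraph with all degrees even containing vertices a_{i-1}, a_i, b_{i-1}, b_i of a rectangular cell, where T contains the double edge (a_i, b_i) with multiplicity 2, the single horizontal edge (b_{i-1}, b_i), no horizontal edge incident to a_i, and the single vertical edge (a_{i-1}, b_{i-1}). Define T' by replacing the two copies of (a_i, b_i) with one copy of (a_i, b_i), adding the horizontal edge (a_{i-1}, a_i), adding one copy of (a_{i-1}, b_{i-1}) (making it a double edge), and removing the edge (b_{i-1}, b_i). Then every vertex of T' has even degree, and if the horizontal edges (a_{i-1}, a_i) and (b_{i-1}, b_i) have equal length and the vertical edges (a_{i-1}, b_{i-1}) and (a_i, b_i) have equal length, then T' has the same total length as T. -/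

import Mathlib

/-- A multigraph on vertex type `V`: a multiset of edges (unordered pairs). -/
structure Multigraph (V : Type*) where
  edges : Multiset (Sym2 V)

namespace Multigraph

variable {V : Type*} [DecidableEq V]

/-- Degree of a vertex, counting edge multiplicities (loops count twice). -/
def deg (G : Multigraph V) (v : V) : ℕ :=
  (G.edges.map (fun e =>
    Sym2.lift ⟨fun a b => (if a = v then 1 else 0) + (if b = v then 1 else 0),
      fun a b => by ring⟩ e)).sum

/-- Total length of a multigraph, with respect to an edge-length function. -/
def length (G : Multigraph V) (len : Sym2 V → ℝ) : ℝ :=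
  (G.edges.map len).sum

/-- Adjacency via some edge of the multigraph. -/
def Adj (G : Multigraph V) (u w : V) : Prop := s(u, w) ∈ G.edges

/-- Reachability in the multigraph. -/
def Reachable (G : Multigraph V) : V → V → Prop :=
  Relation.ReflTransGen G.Adj

/-- A vertex is non-isolated if some edge is incident to it. -/
def NonIsolated (G : Multigraph V) (v : V) : Prop := ∃ e ∈ G.edges, v ∈ e

/-- A multigraph is connected if all non-isolated vertices are mutually reachable. -/
def Connected (G : Multigraph V) : Prop :=
  ∀ u v, G.NonIsolated u → G.NonIsolated v → G.Reachable u v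

end Multigraph

/-- The multiset of edges traversed by a walk given as a list of vertices. -/
def walkEdges {V : Type*} : List V → Multiset (Sym2 V)
  | [] => 0
  | [_] => 0
  | a :: b :: l => s(a, b) ::ₘ walkEdges (b :: l)

theorem Multiset.mem_erase_of_two_le_count {α : Type*} [DecidableEq α] {s : Multiset α}
    {x y : α} (hy : y ∈ s) (hx : 2 ≤ s.count x) : y ∈ s.erase x := by
  by_cases hyx : y = x
  · subst hyx
    rw [← Multiset.count_pos, Multiset.count_erase_self]
    omega
  · exact (Multiset.mem_erase_of_ne hyx).2 hy

namespace Multigraph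

variable {V : Type*}

theorem length_eq_add_of_edges_eq {G : Multigraph V} {s t : Multiset (Sym2 V)}
    (h : G.edges = s + t) (len : Sym2 V → ℝ) :
    G.length len = length ⟨s⟩ len + length ⟨t⟩ len := by
  simp only [length, h, Multiset.map_add, Multiset.sum_add]

variable [DecidableEq V]

theorem deg_zero (v : V) : deg ⟨0⟩ v = 0 := rfl

theorem deg_cons (a b v : V) (s : Multiset (Sym2 V)) :
    deg ⟨s(a, b) ::ₘ s⟩ v = (if a = v then 1 else 0) + (if b = v then 1 else 0) + deg ⟨s⟩ v := by
  simp only [deg, Multiset.map_cons, Multiset.sum_cons, Sym2.lift_mk]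

theorem deg_eq_add_of_edges_eq {G : Multigraph V} {s t : Multiset (Sym2 V)}
    (h : G.edges = s + t) (v : V) : G.deg v = deg ⟨s⟩ v + deg ⟨t⟩ v := by
  simp only [deg, h, Multiset.map_add, Multiset.sum_add]

/-- Every inner vertex of a walk is entered and left once per visit. -/
theorem even_deg_walkEdges_add_ends (u v : V) (l : List V) :
    Even (deg ⟨walkEdges (u :: l)⟩ v + (if u = v then 1 else 0) +
      (if (u :: l).getLast (List.cons_ne_nil u l) = v then 1 else 0)) := by
  induction l generalizing u with
  | nil =>
    simp only [walkEdges, deg_zero, List.getLast_singleton, zero_add]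
    exact ⟨_, rfl⟩
  | cons w l ih =>
    have hw := ih w
    rw [walkEdges, deg_cons, List.getLast_cons (List.cons_ne_nil w l)]
    rw [Nat.even_iff] at hw ⊢
    split_ifs at hw ⊢ <;> omega

theorem even_deg_iff_of_walkEdges_swap {G H : Multigraph V} {u : V} {p q : List V}
    {R : Multiset (Sym2 V)} (hG : G.edges = walkEdges (u :: p) + R)
    (hH : H.edges = walkEdges (u :: q) + R)
    (hends : (u :: p).getLast (List.cons_ne_nil u p) = (u :: q).getLast (List.cons_ne_nil u q))
    (v : V) : Even (G.deg v) ↔ Even (H.deg v) := by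
  have hp := even_deg_walkEdges_add_ends u v p
  have hq := even_deg_walkEdges_add_ends u v q
  rw [hends] at hp
  rw [deg_eq_add_of_edges_eq hG, deg_eq_add_of_edges_eq hH, Nat.even_iff, Nat.even_iff]
  rw [Nat.even_iff] at hp hq
  omega

end Multigraph

theorem shift_transformation_even_and_length_general
    {V : Type*} [DecidableEq V] (T : Multigraph V) (len : Sym2 V → ℝ)
    (a₀ a₁ b₀ b₁ : V)  -- a₀ = a_{i-1}, a₁ = a_i, b₀ = b_{i-1}, b₁ = b_i
    (heven : ∀ v, Even (T.deg v))
    (hdouble : T.edges.count s(a₁, b₁) = 2)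
    (hhoriz : s(b₀, b₁) ∈ T.edges)
    (T' : Multigraph V)
    (hT' : T'.edges =
      s(a₀, a₁) ::ₘ s(a₀, b₀) ::ₘ ((T.edges.erase s(a₁, b₁)).erase s(b₀, b₁))) :
    (∀ v, Even (T'.deg v)) ∧
      (len s(a₀, a₁) = len s(b₀, b₁) → len s(a₀, b₀) = len s(a₁, b₁) →
        T'.length len = T.length len) := by
  set R := (T.edges.erase s(a₁, b₁)).erase s(b₀, b₁)
  -- T and T' share R and differ by the walks a₁ b₁ b₀ and a₁ a₀ b₀ around the cell.
  have hT : T.edges = walkEdges [a₁, b₁, b₀] + R := by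
    have hmem : s(a₁, b₁) ∈ T.edges := Multiset.count_pos.1 (by omega)
    have hmem' : s(b₀, b₁) ∈ T.edges.erase s(a₁, b₁) :=
      Multiset.mem_erase_of_two_le_count hhoriz hdouble.ge
    simp only [walkEdges, Sym2.eq_swap (a := b₁), Multiset.cons_add, Multiset.zero_add, R,
      Multiset.cons_erase hmem', Multiset.cons_erase hmem]
  have hT'walk : T'.edges = walkEdges [a₁, a₀, b₀] + R := by
    simp only [hT', walkEdges, Sym2.eq_swap (a := a₁), Multiset.cons_add, Multiset.zero_add]
  refine ⟨fun v => (Multigraph.even_deg_iff_of_walkEdges_swap hT hT'walk rfl v).1 (heven v), ?_⟩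
  intro htop hvert
  rw [Multigraph.length_eq_add_of_edges_eq hT, Multigraph.length_eq_add_of_edges_eq hT'walk]
  simp only [walkEdges, Multigraph.length, Multiset.map_cons,
    Multiset.sum_cons, Multiset.map_zero, Multiset.sum_zero, Sym2.eq_swap (a := a₁) (b := a₀),
    Sym2.eq_swap (a := b₁) (b := b₀), htop, hvert]
  ring

/-- The state-(0,2)-style transformation T → T' shifting a vertical
double traversal of (aᵢ, bᵢ) to the preceding aisle preserves even degrees and,
when opposite sides of the rectangular cell have equal lengths, total length. -/
theorem shift_transformation_even_and_length
    {V : Type*} [DecidableEq V] (T : Multigraph V) (len : Sym2 V → ℝ)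
    (Horiz : Sym2 V → Prop)
    (a₀ a₁ b₀ b₁ : V)  -- a₀ = a_{i-1}, a₁ = a_i, b₀ = b_{i-1}, b₁ = b_i
    (hd1 : a₀ ≠ a₁) (hd2 : a₀ ≠ b₀) (hd3 : a₀ ≠ b₁)
    (hd4 : a₁ ≠ b₀) (hd5 : a₁ ≠ b₁) (hd6 : b₀ ≠ b₁)
    (hconn : T.Connected) (heven : ∀ v, Even (T.deg v))
    (hdouble : T.edges.count s(a₁, b₁) = 2)
    (hhoriz : s(b₀, b₁) ∈ T.edges)
    (hsingle : T.edges.count s(a₀, b₀) = 1)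
    (hHtop : Horiz s(a₀, a₁)) (hHbot : Horiz s(b₀, b₁))
    (hnoH : ∀ f ∈ T.edges, Horiz f → a₁ ∉ f)
    (T' : Multigraph V)
    (hT' : T'.edges =
      s(a₀, a₁) ::ₘ s(a₀, b₀) ::ₘ ((T.edges.erase s(a₁, b₁)).erase s(b₀, b₁))) :
    (∀ v, Even (T'.deg v)) ∧
      (len s(a₀, a₁) = len s(b₀, b₁) → len s(a₀, b₀) = len s(a₁, b₁) →
        T'.length len = T.length len) :=
  shift_transformation_even_and_length_general T len a₀ a₁ b₀ b₁ heven hdouble hhoriz T' hT'
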